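/- arXiv:1805.04802 — 3 statements merged into one kernel-verified Lean document; each statement's English description precedes it below -/
import Mathlib

section
/- Let {A_{i,j} : i,j ∈ {−1,0,1}} be nonnegative s₀×s₀ matrices whose sum A_{*,*} is an irreducible stochastic matrix and such that the associated random walk on ℤ²×S₀ is irreducible and aperiodic. Define C(e^{s₁}, e^{s₂}) = Σ_{i,j} A_{i,j} e^{i s₁ + j s₂} and χ(e^{s₁}, e^{s₂}) = spr(C(e^{s₁}, e^{s₂})). Then there exist n₀ ≥ 1 and b* > 0 such that χ(e^{s₁}, e^{s₂}) ≥ (b*(e^{s₁} + e^{s₂} + e^{−s₁} + e^{−s₂}))^{1/n₀} for all (s₁,s₂) ∈ ℝ²; consequently the set Γ̄ = {(s₁,s₂) : χ(e^{s₁}, e^{s₂}) ≤ 1} is bounded. -/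
open Matrix

/-- The spectral radius of a complex square matrix: the maximum modulus of its
eigenvalues (elements of its spectrum). -/
noncomputable def spr {n : Type*} [Fintype n] [DecidableEq n] (A : Matrix n n ℂ) : ℝ :=
  sSup ((fun z : ℂ => ‖z‖) '' spectrum ℂ A)

/-- `C(e^{s₁}, e^{s₂}) = Σ_{i,j ∈ {−1,0,1}} A_{i,j} e^{i s₁ + j s₂}`. -/
noncomputable def Cmat {S : Type*} [Fintype S] (A : ℤ → ℤ → Matrix S S ℝ) (s₁ s₂ : ℝ) :
    Matrix S S ℝ :=
  ∑ i ∈ Finset.Icc (-1 : ℤ) 1, ∑ j ∈ Finset.Icc (-1 : ℤ) 1,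
    Real.exp ((i : ℝ) * s₁ + (j : ℝ) * s₂) • A i j

/-- The `n`-step transition kernel of the random walk on `ℤ² × S` with skip-free block
transition matrices `A_{Δx₁, Δx₂}`, `Δx₁, Δx₂ ∈ {−1,0,1}`. -/
noncomputable def Pn {S : Type*} [Fintype S] [DecidableEq S]
    (A : ℤ → ℤ → Matrix S S ℝ) : ℕ → (ℤ × ℤ × S) → (ℤ × ℤ × S) → ℝ
  | 0 => fun s t => if s = t then 1 else 0
  | n + 1 => fun s t =>
      ∑ d₁ ∈ Finset.Icc (-1 : ℤ) 1, ∑ d₂ ∈ Finset.Icc (-1 : ℤ) 1, ∑ k : S,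
        Pn A n s (t.1 - d₁, t.2.1 - d₂, k) * A d₁ d₂ k t.2.2

/-! If the walk started at `(0, 0, k)` is at `(x, y, k)` after `n` steps with probability `P`,
then `P · e^{x s₁ + y s₂} ≤ (Cⁿ)_{kk} ≤ tr Cⁿ ≤ s₀ χⁿ`, because every path contributes the
product of its exponential weights to `(Cⁿ)_{kk}` and `tr Cⁿ` is the sum of the `n`-th powers
of the eigenvalues of `C`. By aperiodicity a single `n₀` makes all four displacements
`(±1, 0)`, `(0, ±1)` reachable, so `χ^{n₀} ≥ b (e^{s₁} + e^{s₂} + e^{-s₁} + e^{-s₂})`; the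
right-hand side dominates `b e^{‖(s₁, s₂)‖}`, hence `χ ≤ 1` confines `(s₁, s₂)` to a ball. -/

section SpectralRadius

variable {n : Type*} [Fintype n] [DecidableEq n]

lemma spr_nonneg (M : Matrix n n ℂ) : 0 ≤ spr M :=
  Real.sSup_nonneg (by rintro _ ⟨z, -, rfl⟩; exact norm_nonneg z)

lemma norm_le_spr (M : Matrix n n ℂ) {z : ℂ} (hz : z ∈ spectrum ℂ M) : ‖z‖ ≤ spr M :=
  le_csSup (M.finite_spectrum.image _).bddAbove ⟨z, hz, rfl⟩

lemma spr_pow_le (M : Matrix n n ℂ) {k : ℕ} (hk : 0 < k) : spr (M ^ k) ≤ spr M ^ k := by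
  refine Real.sSup_le ?_ (pow_nonneg (spr_nonneg M) k)
  rintro _ ⟨z, hz, rfl⟩
  rw [spectrum.map_pow_of_pos M hk] at hz
  obtain ⟨w, hw, rfl⟩ := hz
  show ‖w ^ k‖ ≤ _
  rw [norm_pow]
  exact pow_le_pow_left₀ (norm_nonneg w) (norm_le_spr M hw) k

lemma norm_trace_le_card_mul_spr (M : Matrix n n ℂ) :
    ‖M.trace‖ ≤ Fintype.card n * spr M := by
  rw [trace_eq_sum_roots_charpoly]
  have hroots : ∀ x ∈ M.charpoly.roots.map (‖·‖), x ≤ spr M := by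
    intro x hx
    obtain ⟨z, hz, rfl⟩ := Multiset.mem_map.1 hx
    exact norm_le_spr M (mem_spectrum_iff_isRoot_charpoly.2 (Polynomial.isRoot_of_mem_roots hz))
  calc ‖M.charpoly.roots.sum‖ ≤ (M.charpoly.roots.map (‖·‖)).sum := norm_multiset_sum_le _
    _ ≤ Multiset.card M.charpoly.roots • spr M := by
      simpa using Multiset.sum_le_card_nsmul _ _ hroots
    _ ≤ Fintype.card n * spr M := by
      rw [nsmul_eq_mul]
      gcongr
      · exact spr_nonneg M
      · exact_mod_cast (Polynomial.card_roots' _).trans M.charpoly_natDegree_eq_dim.le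

lemma trace_le_card_mul_spr_map_ofReal (M : Matrix n n ℝ) :
    M.trace ≤ Fintype.card n * spr (M.map Complex.ofReal) := by
  have h := norm_trace_le_card_mul_spr (M.map Complex.ofReal)
  have htr : (M.map Complex.ofReal).trace = M.trace := by simp [Matrix.trace]
  rw [htr, Complex.norm_real, Real.norm_eq_abs] at h
  exact (le_abs_self _).trans h

lemma pow_apply_self_le_card_mul_spr_pow {M : Matrix n n ℝ} (hM : ∀ i j, 0 ≤ M i j) {k : ℕ}
    (hk : 0 < k) (i : n) : (M ^ k) i i ≤ Fintype.card n * spr (M.map Complex.ofReal) ^ k :=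
  calc (M ^ k) i i ≤ (M ^ k).trace :=
        Finset.single_le_sum (fun j _ => pow_apply_nonneg hM k j j) (Finset.mem_univ i)
    _ ≤ Fintype.card n * spr ((M ^ k).map Complex.ofReal) := trace_le_card_mul_spr_map_ofReal _
    _ = Fintype.card n * spr (M.map Complex.ofReal ^ k) := by
      congr 2
      exact map_pow Complex.ofRealHom.mapMatrix M k
    _ ≤ Fintype.card n * spr (M.map Complex.ofReal) ^ k := by
      gcongr
      exact spr_pow_le _ hk

end SpectralRadius

section RandomWalk

variable {S : Type*} [Fintype S] (A : ℤ → ℤ → Matrix S S ℝ)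

lemma Cmat_apply (s₁ s₂ : ℝ) (k q : S) :
    Cmat A s₁ s₂ k q = ∑ i ∈ Finset.Icc (-1 : ℤ) 1, ∑ j ∈ Finset.Icc (-1 : ℤ) 1,
      Real.exp ((i : ℝ) * s₁ + (j : ℝ) * s₂) * A i j k q := by
  simp [Cmat, Matrix.sum_apply]

variable {A}

lemma Cmat_apply_nonneg (hnn : ∀ i j k l, 0 ≤ A i j k l) (s₁ s₂ : ℝ) (k q : S) :
    0 ≤ Cmat A s₁ s₂ k q := by
  rw [Cmat_apply]
  exact Finset.sum_nonneg fun i _ => Finset.sum_nonneg fun j _ =>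
    mul_nonneg (Real.exp_pos _).le (hnn i j k q)

variable [DecidableEq S]

lemma Pn_mul_exp_le_Cmat_pow_apply (hnn : ∀ i j k l, 0 ≤ A i j k l) (s₁ s₂ : ℝ) (n : ℕ)
    (x y : ℤ) (p q : S) :
    Pn A n (0, 0, p) (x, y, q) * Real.exp ((x : ℝ) * s₁ + (y : ℝ) * s₂)
      ≤ (Cmat A s₁ s₂ ^ n) p q := by
  induction n generalizing x y q with
  | zero =>
    by_cases h : ((0 : ℤ), (0 : ℤ), p) = (x, y, q)
    · obtain ⟨rfl, rfl, rfl⟩ := Prod.ext_iff.1 h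
      simp [Pn]
    · simpa [Pn, h] using pow_apply_nonneg (Cmat_apply_nonneg hnn s₁ s₂) 0 p q
  | succ n ih =>
    have hC : (Cmat A s₁ s₂ ^ (n + 1)) p q
        = ∑ d₁ ∈ Finset.Icc (-1 : ℤ) 1, ∑ d₂ ∈ Finset.Icc (-1 : ℤ) 1, ∑ k : S,
            (Cmat A s₁ s₂ ^ n) p k *
              (Real.exp ((d₁ : ℝ) * s₁ + (d₂ : ℝ) * s₂) * A d₁ d₂ k q) := by
      rw [pow_succ, Matrix.mul_apply]
      simp_rw [Cmat_apply, Finset.mul_sum]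
      rw [Finset.sum_comm]
      exact Finset.sum_congr rfl fun d₁ _ => Finset.sum_comm
    rw [hC, Pn, Finset.sum_mul]
    refine Finset.sum_le_sum fun d₁ _ => ?_
    rw [Finset.sum_mul]
    refine Finset.sum_le_sum fun d₂ _ => ?_
    rw [Finset.sum_mul]
    refine Finset.sum_le_sum fun k _ => ?_
    have hexp : Real.exp ((x : ℝ) * s₁ + (y : ℝ) * s₂)
        = Real.exp (((x - d₁ : ℤ) : ℝ) * s₁ + ((y - d₂ : ℤ) : ℝ) * s₂) *
            Real.exp ((d₁ : ℝ) * s₁ + (d₂ : ℝ) * s₂) := by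
      rw [← Real.exp_add]
      push_cast
      ring_nf
    calc Pn A n (0, 0, p) (x - d₁, y - d₂, k) * A d₁ d₂ k q *
          Real.exp ((x : ℝ) * s₁ + (y : ℝ) * s₂)
        = Pn A n (0, 0, p) (x - d₁, y - d₂, k) *
            Real.exp (((x - d₁ : ℤ) : ℝ) * s₁ + ((y - d₂ : ℤ) : ℝ) * s₂) *
            (Real.exp ((d₁ : ℝ) * s₁ + (d₂ : ℝ) * s₂) * A d₁ d₂ k q) := by
          rw [hexp]; ring
      _ ≤ (Cmat A s₁ s₂ ^ n) p k *
            (Real.exp ((d₁ : ℝ) * s₁ + (d₂ : ℝ) * s₂) * A d₁ d₂ k q) := by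
          gcongr
          · exact mul_nonneg (Real.exp_pos _).le (hnn d₁ d₂ k q)
          · exact ih _ _ _

lemma exists_mul_exp_sum_le_Cmat_pow_apply (hnn : ∀ i j k l, 0 ≤ A i j k l)
    (hchain : ∀ s t : ℤ × ℤ × S, ∃ N : ℕ, ∀ n ≥ N, 0 < Pn A n s t) (k : S) :
    ∃ n₀ : ℕ, 0 < n₀ ∧ ∃ c : ℝ, 0 < c ∧ ∀ s₁ s₂ : ℝ,
      c * (Real.exp s₁ + Real.exp s₂ + Real.exp (-s₁) + Real.exp (-s₂))
        ≤ (Cmat A s₁ s₂ ^ n₀) k k := by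
  have hev : ∀ x y : ℤ, ∀ᶠ n in Filter.atTop, 0 < Pn A n (0, 0, k) (x, y, k) := fun x y =>
    Filter.eventually_atTop.2 (hchain _ _)
  obtain ⟨n₀, hn₀, h₁, h₂, h₃, h₄⟩ := ((Filter.eventually_gt_atTop 0).and ((hev 1 0).and
    ((hev 0 1).and ((hev (-1) 0).and (hev 0 (-1)))))).exists
  set c := min (min (Pn A n₀ (0, 0, k) (1, 0, k)) (Pn A n₀ (0, 0, k) (0, 1, k)))
    (min (Pn A n₀ (0, 0, k) (-1, 0, k)) (Pn A n₀ (0, 0, k) (0, -1, k)))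
  refine ⟨n₀, hn₀, c / 4, by positivity, fun s₁ s₂ => ?_⟩
  have hterm : ∀ x y : ℤ, c ≤ Pn A n₀ (0, 0, k) (x, y, k) →
      c * Real.exp ((x : ℝ) * s₁ + (y : ℝ) * s₂) ≤ (Cmat A s₁ s₂ ^ n₀) k k := fun x y hc =>
    (mul_le_mul_of_nonneg_right hc (Real.exp_pos _).le).trans
      (Pn_mul_exp_le_Cmat_pow_apply hnn s₁ s₂ n₀ x y k k)
  have e₁ := hterm 1 0 ((min_le_left _ _).trans (min_le_left _ _))
  have e₂ := hterm 0 1 ((min_le_left _ _).trans (min_le_right _ _))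
  have e₃ := hterm (-1) 0 ((min_le_right _ _).trans (min_le_left _ _))
  have e₄ := hterm 0 (-1) ((min_le_right _ _).trans (min_le_right _ _))
  simp only [Int.cast_one, Int.cast_zero, Int.cast_neg, one_mul, zero_mul, neg_one_mul,
    add_zero, zero_add] at e₁ e₂ e₃ e₄
  linarith

end RandomWalk

lemma isBounded_setOf_mul_exp_sum_le {b : ℝ} (hb : 0 < b) :
    Bornology.IsBounded
      {p : ℝ × ℝ | b * (Real.exp p.1 + Real.exp p.2 + Real.exp (-p.1) + Real.exp (-p.2)) ≤ 1} := by
  refine (Metric.isBounded_closedBall (x := (0 : ℝ × ℝ)) (r := Real.log b⁻¹)).subset ?_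
  intro p hp
  have hsum : Real.exp p.1 + Real.exp p.2 + Real.exp (-p.1) + Real.exp (-p.2) ≤ b⁻¹ := by
    rwa [← one_div, le_div_iff₀' hb]
  have habs : ∀ x : ℝ, Real.exp x + Real.exp (-x) ≤ b⁻¹ → |x| ≤ Real.log b⁻¹ := fun x hx =>
    (Real.le_log_iff_exp_le (inv_pos.2 hb)).2 ((Real.exp_abs_le x).trans hx)
  rw [Metric.mem_closedBall, dist_zero_right, Prod.norm_def, Real.norm_eq_abs, Real.norm_eq_abs]
  exact max_le (habs _ (by linarith [Real.exp_pos p.2, Real.exp_pos (-p.2)]))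
    (habs _ (by linarith [Real.exp_pos p.1, Real.exp_pos (-p.1)]))

theorem stmt8_general {S : Type*} [Fintype S] [DecidableEq S] [Nonempty S]
    (A : ℤ → ℤ → Matrix S S ℝ)
    (hnn : ∀ i j k l, 0 ≤ A i j k l)
    (hchain : ∀ s t : ℤ × ℤ × S, ∃ N : ℕ, ∀ n ≥ N, 0 < Pn A n s t) :
    (∃ n₀ : ℕ, 1 ≤ n₀ ∧ ∃ b : ℝ, 0 < b ∧ ∀ s₁ s₂ : ℝ,
      (b * (Real.exp s₁ + Real.exp s₂ + Real.exp (-s₁) + Real.exp (-s₂))) ^ ((1 : ℝ) / n₀)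
        ≤ spr ((Cmat A s₁ s₂).map Complex.ofReal)) ∧
    Bornology.IsBounded {p : ℝ × ℝ | spr ((Cmat A p.1 p.2).map Complex.ofReal) ≤ 1} := by
  obtain ⟨k⟩ := ‹Nonempty S›
  obtain ⟨n₀, hn₀, c, hc, hle⟩ := exists_mul_exp_sum_le_Cmat_pow_apply hnn hchain k
  have hcard : (0 : ℝ) < Fintype.card S := by exact_mod_cast Fintype.card_pos
  have hmain : ∀ s₁ s₂ : ℝ,
      c / Fintype.card S * (Real.exp s₁ + Real.exp s₂ + Real.exp (-s₁) + Real.exp (-s₂))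
        ≤ spr ((Cmat A s₁ s₂).map Complex.ofReal) ^ n₀ := fun s₁ s₂ => by
    rw [div_mul_eq_mul_div, div_le_iff₀ hcard, mul_comm _ (Fintype.card S : ℝ)]
    exact (hle s₁ s₂).trans (pow_apply_self_le_card_mul_spr_pow
      (Cmat_apply_nonneg hnn s₁ s₂) hn₀ k)
  refine ⟨⟨n₀, hn₀, c / Fintype.card S, by positivity, fun s₁ s₂ => ?_⟩, ?_⟩
  · rw [one_div, Real.rpow_inv_le_iff_of_pos (by positivity) (spr_nonneg _) (by positivity),
      Real.rpow_natCast]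
    exact hmain s₁ s₂
  · exact (isBounded_setOf_mul_exp_sum_le (by positivity : 0 < c / Fintype.card S)).subset
      fun p hp => (hmain p.1 p.2).trans (pow_le_one₀ (spr_nonneg _) hp)

/-- Let `A_{i,j}`, `i,j ∈ {−1,0,1}`, be nonnegative matrices whose sum is an irreducible
stochastic matrix, with the associated random walk on `ℤ² × S` irreducible and aperiodic.
Then there exist `n₀ ≥ 1` and `b* > 0` such that
`χ(e^{s₁}, e^{s₂}) ≥ (b* (e^{s₁} + e^{s₂} + e^{−s₁} + e^{−s₂}))^{1/n₀}` for all `(s₁,s₂)`,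
and consequently `Γ̄ = {(s₁,s₂) : χ(e^{s₁}, e^{s₂}) ≤ 1}` is bounded. -/
theorem stmt8 {S : Type*} [Fintype S] [DecidableEq S] [Nonempty S]
    (A : ℤ → ℤ → Matrix S S ℝ)
    (hnn : ∀ i j k l, 0 ≤ A i j k l)
    (hstoch : ∀ p : S,
      ∑ i ∈ Finset.Icc (-1 : ℤ) 1, ∑ j ∈ Finset.Icc (-1 : ℤ) 1, ∑ q : S, A i j p q = 1)
    (hirr : ∀ p q : S, ∃ n : ℕ, 0 < n ∧
      0 < (((∑ i ∈ Finset.Icc (-1 : ℤ) 1, ∑ j ∈ Finset.Icc (-1 : ℤ) 1, A i j)) ^ n) p q)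
    (hchain : ∀ s t : ℤ × ℤ × S, ∃ N : ℕ, ∀ n ≥ N, 0 < Pn A n s t) :
    (∃ n₀ : ℕ, 1 ≤ n₀ ∧ ∃ b : ℝ, 0 < b ∧ ∀ s₁ s₂ : ℝ,
      (b * (Real.exp s₁ + Real.exp s₂ + Real.exp (-s₁) + Real.exp (-s₂))) ^ ((1 : ℝ) / n₀)
        ≤ spr ((Cmat A s₁ s₂).map Complex.ofReal)) ∧
    Bornology.IsBounded {p : ℝ × ℝ | spr ((Cmat A p.1 p.2).map Complex.ofReal) ≤ 1} :=
  stmt8_general A hnn hchain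
end

section
/- Suppose the matrix series G₁(z) = Σ_{n≥1} D₁^{(n)}(z) converges absolutely, where D₁^{(n)}(z) = Σ_{σ∈𝓘_{D,1,n}} A_{*,σ₁}(z)···A_{*,σ_n}(z). Then G₁(z) satisfies the matrix quadratic equation A_{*,−1}(z) + A_{*,0}(z) G₁(z) + A_{*,1}(z) G₁(z)² = G₁(z). -/
open Matrix

/-- Encoding of `{−1, 0, 1}` by `Fin 3`. -/
def stepZ : Fin 3 → ℤ := fun t => (t : ℤ) - 1

open Classical in
/-- `𝓘_{D,m,n}`: the set of `{−1,0,1}`-sequences of length `n` whose proper partial sums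
are `≥ −m+1` and whose total sum is `−m`. -/
noncomputable def Dset (m n : ℕ) : Finset (Fin n → Fin 3) :=
  Finset.univ.filter fun σ =>
    (∀ k : Fin n, (k : ℕ) < n - 1 →
      -(m : ℤ) + 1 ≤ ∑ l ∈ Finset.univ.filter (· ≤ k), stepZ (σ l)) ∧
    ∑ l, stepZ (σ l) = -(m : ℤ)

/-- `A_{*,j}(z) = Σ_{i ∈ {−1,0,1}} A_{i,j} z^i` as a complex matrix. -/
noncomputable def AstarC {S : Type*} [Fintype S] (A : ℤ → ℤ → Matrix S S ℝ) (j : ℤ)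
    (z : ℂ) : Matrix S S ℂ :=
  ∑ i ∈ Finset.Icc (-1 : ℤ) 1, z ^ i • (A i j).map Complex.ofReal

/-- `D₁⁽ⁿ⁾(z) = Σ_{σ ∈ 𝓘_{D,1,n}} A_{*,σ₁}(z) ⋯ A_{*,σₙ}(z)`. -/
noncomputable def DnC {S : Type*} [Fintype S] [DecidableEq S]
    (A : ℤ → ℤ → Matrix S S ℝ) (n : ℕ) (z : ℂ) : Matrix S S ℂ :=
  ∑ σ ∈ Dset 1 n, (List.ofFn fun l : Fin n => AstarC A (stepZ (σ l)) z).prod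

/-!
Read a `{−1, 0, 1}`-sequence as a walk started at height `m` that stays positive until it hits `0`
at its last step; `𝓘_{D,m,n}` is the set of such walks of length `n`. Conditioning on the first
step, a walk from height `1` stops (step `−1`), restarts from height `1` (step `0`) or continues
from height `2` (step `1`). Since no step is below `−1`, a walk from height `2` splits uniquely at
its first visit to height `1` into two walks from height `1`, so the matrix sums over walks from
height `2` are the Cauchy products of those from height `1`. Absolute convergence lets us sum
these identities over `n` and multiply the series.
-/

open Finset

def IsFirstPassage : ℤ → List (Fin 3) → Prop
  | h, [] => h = 0
  | h, t :: l => 0 < h ∧ IsFirstPassage (h + stepZ t) l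

lemma neg_one_le_stepZ (t : Fin 3) : -1 ≤ stepZ t := by
  fin_cases t <;> decide

namespace IsFirstPassage

@[simp] lemma nil_iff {h : ℤ} : IsFirstPassage h [] ↔ h = 0 := Iff.rfl

@[simp] lemma cons_iff {h : ℤ} {t : Fin 3} {l : List (Fin 3)} :
    IsFirstPassage h (t :: l) ↔ 0 < h ∧ IsFirstPassage (h + stepZ t) l := Iff.rfl

lemma zero_iff {l : List (Fin 3)} : IsFirstPassage 0 l ↔ l = [] := by
  cases l <;> simp

lemma iff_partialSums {h : ℤ} {l : List (Fin 3)} :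
    IsFirstPassage h l ↔
      (∀ k < l.length, 0 < h + ((l.map stepZ).take k).sum) ∧ h + (l.map stepZ).sum = 0 := by
  induction l generalizing h with
  | nil => simp
  | cons t l ih =>
    simp only [cons_iff, ih, List.length_cons, Nat.forall_lt_succ_left, List.take_zero,
      List.take_succ_cons, List.map_cons, List.sum_cons, List.sum_nil, add_zero,
      add_assoc, and_assoc]

lemma append {h k : ℤ} {l₁ l₂ : List (Fin 3)} (h₁ : IsFirstPassage h l₁)
    (h₂ : IsFirstPassage k l₂) (hk : 0 ≤ k) : IsFirstPassage (h + k) (l₁ ++ l₂) := by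
  induction l₁ generalizing h with
  | nil => simp_all
  | cons t l ih =>
    refine ⟨by linarith [h₁.1], ?_⟩
    rw [add_right_comm]
    exact ih h₁.2

lemma eq_nil_of_append {h : ℤ} {l r : List (Fin 3)} (hl : IsFirstPassage h l)
    (hlr : IsFirstPassage h (l ++ r)) : r = [] := by
  induction l generalizing h with
  | nil => simp_all [zero_iff]
  | cons t l ih => exact ih hl.2 hlr.2

lemma append_inj {h : ℤ} {l₁ l₂ r₁ r₂ : List (Fin 3)} (hl₁ : IsFirstPassage h l₁)
    (hl₂ : IsFirstPassage h l₂) (he : l₁ ++ r₁ = l₂ ++ r₂) : l₁ = l₂ ∧ r₁ = r₂ := by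
  obtain ⟨c, rfl, rfl⟩ | ⟨c, rfl, rfl⟩ := List.append_eq_append_iff.mp he
  · obtain rfl := hl₁.eq_nil_of_append hl₂
    simp
  · obtain rfl := hl₂.eq_nil_of_append hl₁
    simp

/-- The walk from `h + k` cannot jump over level `k`, because every step is at least `−1`. -/
lemma exists_append {h k : ℤ} {l : List (Fin 3)} (hh : 0 ≤ h) (hk : 0 ≤ k)
    (hl : IsFirstPassage (h + k) l) :
    ∃ l₁ l₂, IsFirstPassage h l₁ ∧ IsFirstPassage k l₂ ∧ l₁ ++ l₂ = l := by
  induction l generalizing h with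
  | nil => exact ⟨[], [], by simp at hl ⊢; omega⟩
  | cons t l ih =>
    obtain rfl | hh := hh.eq_or_lt
    · exact ⟨[], t :: l, rfl, by simpa using hl, rfl⟩
    obtain ⟨l₁, l₂, h₁, h₂, rfl⟩ :=
      ih (h := h + stepZ t) (by linarith [neg_one_le_stepZ t]) (by rw [add_right_comm]; exact hl.2)
    exact ⟨t :: l₁, l₂, ⟨hh, h₁⟩, h₂, rfl⟩

end IsFirstPassage

open Classical in
noncomputable def firstPassagePaths (h : ℤ) (n : ℕ) : Finset (List (Fin 3)) :=
  (univ.image (List.ofFn : (Fin n → Fin 3) → _)).filter (IsFirstPassage h)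

lemma mem_firstPassagePaths {h : ℤ} {n : ℕ} {l : List (Fin 3)} :
    l ∈ firstPassagePaths h n ↔ l.length = n ∧ IsFirstPassage h l := by
  simp only [firstPassagePaths, mem_filter, mem_image, mem_univ, true_and]
  refine and_congr_left' ⟨?_, ?_⟩
  · rintro ⟨σ, rfl⟩
    exact List.length_ofFn
  · rintro rfl
    exact ⟨_, List.ofFn_getElem⟩

section firstPassageSum

variable {M : Type*} [Semiring M] (F : Fin 3 → M)

noncomputable def firstPassageSum (h : ℤ) (n : ℕ) : M :=
  ∑ l ∈ firstPassagePaths h n, (l.map F).prod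

lemma firstPassageSum_height_zero (n : ℕ) :
    firstPassageSum F 0 n = if n = 0 then 1 else 0 := by
  have : firstPassagePaths 0 n = if n = 0 then {[]} else ∅ := by
    ext (_ | ⟨t, l⟩) <;> split_ifs with hn <;> simp [mem_firstPassagePaths, hn, eq_comm]
  rw [firstPassageSum, this]
  split_ifs <;> simp

lemma firstPassageSum_succ {h : ℤ} (hh : 0 < h) (n : ℕ) :
    firstPassageSum F h (n + 1) = ∑ t, F t * firstPassageSum F (h + stepZ t) n := by
  simp only [firstPassageSum, mul_sum]
  rw [sum_sigma']
  refine (sum_bij (fun x _ => x.1 :: x.2) ?_ ?_ ?_ ?_).symm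
  · rintro ⟨t, l⟩ hx
    simp only [mem_sigma, mem_univ, true_and, mem_firstPassagePaths] at hx ⊢
    exact ⟨by simp [hx.1], hh, hx.2⟩
  · rintro ⟨t, l⟩ _ ⟨t', l'⟩ _ he
    obtain ⟨rfl, rfl⟩ := List.cons.inj he
    rfl
  · rintro (_ | ⟨t, l⟩) hl <;> simp only [mem_firstPassagePaths, List.length_cons] at hl
    · simp at hl
    · exact ⟨⟨t, l⟩, by simpa [mem_firstPassagePaths] using ⟨Nat.succ_injective hl.1, hl.2.2⟩, rfl⟩
  · intro x _
    simp

lemma firstPassageSum_add {h k : ℤ} (hh : 0 ≤ h) (hk : 0 ≤ k) (n : ℕ) :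
    firstPassageSum F (h + k) n =
      ∑ p ∈ antidiagonal n, firstPassageSum F h p.1 * firstPassageSum F k p.2 := by
  simp only [firstPassageSum, sum_mul_sum, ← sum_product']
  rw [sum_sigma']
  refine (sum_bij (fun x _ => x.2.1 ++ x.2.2) ?_ ?_ ?_ ?_).symm
  · rintro ⟨p, l₁, l₂⟩ hx
    simp only [mem_sigma, HasAntidiagonal.mem_antidiagonal, mem_product,
      mem_firstPassagePaths] at hx ⊢
    exact ⟨by simp [hx.2.1.1, hx.2.2.1, hx.1], hx.2.1.2.append hx.2.2.2 hk⟩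
  · rintro ⟨p, l₁, l₂⟩ hx ⟨p', l₁', l₂'⟩ hx' he
    simp only [mem_sigma, HasAntidiagonal.mem_antidiagonal, mem_product,
      mem_firstPassagePaths] at hx hx'
    obtain ⟨rfl, rfl⟩ := hx.2.1.2.append_inj hx'.2.1.2 he
    obtain rfl : p = p' := by
      ext <;> simp only [← hx.2.1.1, ← hx'.2.1.1, ← hx.2.2.1, ← hx'.2.2.1]
    rfl
  · intro l hl
    rw [mem_firstPassagePaths] at hl
    obtain ⟨l₁, l₂, h₁, h₂, rfl⟩ := IsFirstPassage.exists_append hh hk hl.2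
    refine ⟨⟨(l₁.length, l₂.length), l₁, l₂⟩, ?_, rfl⟩
    simp [mem_firstPassagePaths, h₁, h₂, ← hl.1]
  · intro x _
    simp

lemma firstPassageSum_one_zero : firstPassageSum F 1 0 = 0 := by
  refine sum_eq_zero fun l hl => ?_
  obtain ⟨hl, hp⟩ := mem_firstPassagePaths.mp hl
  simp [List.length_eq_zero_iff.mp hl] at hp

lemma firstPassageSum_one_succ (n : ℕ) :
    firstPassageSum F 1 (n + 1) =
      F 0 * firstPassageSum F 0 n + F 1 * firstPassageSum F 1 n + F 2 * firstPassageSum F 2 n := by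
  rw [firstPassageSum_succ F one_pos, Fin.sum_univ_three]
  rfl

end firstPassageSum

lemma sum_filter_le_eq_sum_take_ofFn {n : ℕ} (f : Fin n → ℤ) (k : Fin n) [DecidablePred (· ≤ k)] :
    ∑ l ∈ univ.filter (· ≤ k), f l = ((List.ofFn f).take (k + 1)).sum := by
  rw [List.sum_take_ofFn]
  exact sum_congr (filter_congr fun l _ => by rw [Fin.le_def, Nat.lt_succ_iff]) fun _ _ => rfl

lemma mem_Dset_iff_isFirstPassage {m n : ℕ} (hm : 1 ≤ m) {σ : Fin n → Fin 3} :
    σ ∈ Dset m n ↔ IsFirstPassage m (List.ofFn σ) := by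
  rw [IsFirstPassage.iff_partialSums]
  simp only [Dset, mem_filter, mem_univ, true_and, List.length_ofFn,
    List.map_ofFn, sum_filter_le_eq_sum_take_ofFn, List.sum_ofFn, Function.comp_def]
  refine and_congr ⟨fun hσ k hk => ?_, fun hσ k hk => ?_⟩ (by omega)
  · cases k with
    | zero => simp; omega
    | succ k => linarith [hσ ⟨k, by omega⟩ (by simp only; omega)]
  · linarith [hσ (k + 1) (by omega)]

lemma DnC_eq_firstPassageSum {S : Type*} [Fintype S] [DecidableEq S]
    (A : ℤ → ℤ → Matrix S S ℝ) (n : ℕ) (z : ℂ) :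
    DnC A n z = firstPassageSum (fun t => AstarC A (stepZ t) z) 1 n := by
  have : firstPassagePaths 1 n = (Dset 1 n).image List.ofFn := by
    ext l
    simp only [mem_image, mem_firstPassagePaths]
    constructor
    · rintro ⟨rfl, hl⟩
      refine ⟨_, (mem_Dset_iff_isFirstPassage le_rfl).mpr ?_, List.ofFn_getElem⟩
      simpa [List.ofFn_getElem] using hl
    · rintro ⟨σ, hσ, rfl⟩
      exact ⟨List.length_ofFn, by simpa using (mem_Dset_iff_isFirstPassage le_rfl).mp hσ⟩
  rw [firstPassageSum, this, sum_image fun _ _ _ _ h => List.ofFn_injective h]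
  simp [DnC, List.map_ofFn, Function.comp_def]

namespace Matrix

lemma summable_of_summable_norm_apply {ι m n R : Type*} [NormedAddCommGroup R] [CompleteSpace R]
    {f : ι → Matrix m n R} (hf : ∀ i j, Summable fun k => ‖f k i j‖) : Summable f :=
  Pi.summable.mpr fun i => Pi.summable.mpr fun j => (hf i j).of_norm

lemma hasSum_apply_of_summable_norm_apply {ι m n R : Type*} [NormedAddCommGroup R]
    [CompleteSpace R] {f : ι → Matrix m n R} (hf : ∀ i j, Summable fun k => ‖f k i j‖) (i : m)
    (j : n) : HasSum (fun k => f k i j) ((∑' k, f k) i j) :=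
  Pi.hasSum.mp (Pi.hasSum.mp (summable_of_summable_norm_apply hf).hasSum i) j

lemma hasSum_sum_antidiagonal_mul_of_summable_norm_apply {m R : Type*} [Fintype m]
    [NormedRing R] [CompleteSpace R] {f g : ℕ → Matrix m m R}
    (hf : ∀ i j, Summable fun k => ‖f k i j‖) (hg : ∀ i j, Summable fun k => ‖g k i j‖) :
    HasSum (fun k => ∑ p ∈ antidiagonal k, f p.1 * g p.2) ((∑' k, f k) * ∑' k, g k) := by
  refine Pi.hasSum.mpr fun i => Pi.hasSum.mpr fun j => ?_
  have entry (u : m) : HasSum (fun k => ∑ p ∈ antidiagonal k, f p.1 i u * g p.2 u j)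
      ((∑' k, f k) i u * (∑' k, g k) u j) := by
    rw [← (hasSum_apply_of_summable_norm_apply hf i u).tsum_eq,
      ← (hasSum_apply_of_summable_norm_apply hg u j).tsum_eq,
      tsum_mul_tsum_eq_tsum_sum_antidiagonal_of_summable_norm (hf i u) (hg u j)]
    exact (summable_norm_sum_mul_antidiagonal_of_summable_norm (hf i u) (hg u j)).of_norm.hasSum
  convert hasSum_sum fun u (_ : u ∈ univ) => entry u using 1
  · funext k
    simp only [sum_apply, mul_apply]
    exact sum_comm
  · exact mul_apply

end Matrix

theorem stmt14_general {S : Type*} [Fintype S] [DecidableEq S]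
    (A : ℤ → ℤ → Matrix S S ℝ)
    (z : ℂ)
    (habs : ∀ k l, Summable fun n => ‖DnC A (n + 1) z k l‖) :
    AstarC A (-1) z + AstarC A 0 z * (∑' n, DnC A (n + 1) z)
      + AstarC A 1 z * (∑' n, DnC A (n + 1) z) ^ 2 = ∑' n, DnC A (n + 1) z := by
  set F : Fin 3 → Matrix S S ℂ := fun t => AstarC A (stepZ t) z
  set G := ∑' n, DnC A (n + 1) z
  have hD (n : ℕ) : DnC A n z = firstPassageSum F 1 n := DnC_eq_firstPassageSum A n z
  have hG_succ : HasSum (fun n => firstPassageSum F 1 (n + 1)) G := by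
    simpa only [← hD] using (Matrix.summable_of_summable_norm_apply habs).hasSum
  have hG : HasSum (firstPassageSum F 1) G := by
    simpa [firstPassageSum_one_zero] using (hasSum_nat_add_iff 1).mp hG_succ
  have habs' (i j : S) : Summable fun n => ‖firstPassageSum F 1 n i j‖ :=
    (summable_nat_add_iff 1).mp (by simpa only [← hD] using habs i j)
  have hG_two : HasSum (firstPassageSum F 2) (G * G) := by
    have := Matrix.hasSum_sum_antidiagonal_mul_of_summable_norm_apply habs' habs'
    rw [hG.tsum_eq] at this
    simpa [← firstPassageSum_add F zero_le_one zero_le_one, one_add_one_eq_two] using this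
  have hG_step : HasSum (fun n => firstPassageSum F 1 (n + 1)) (F 0 + F 1 * G + F 2 * (G * G)) := by
    simpa [firstPassageSum_one_succ, firstPassageSum_height_zero] using
      (((hasSum_ite_eq 0 (1 : Matrix S S ℂ)).mul_left (F 0)).add (hG.mul_left (F 1))).add
        (hG_two.mul_left (F 2))
  rw [sq]
  exact hG_step.unique hG_succ

/-- If `G₁(z) = Σ_{n ≥ 1} D₁⁽ⁿ⁾(z)` converges absolutely, then `G₁(z)` satisfies
`A_{*,−1}(z) + A_{*,0}(z) G₁(z) + A_{*,1}(z) G₁(z)² = G₁(z)`. -/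
theorem stmt14 {S : Type*} [Fintype S] [DecidableEq S]
    (A : ℤ → ℤ → Matrix S S ℝ) (hnn : ∀ i j k l, 0 ≤ A i j k l)
    (z : ℂ)
    (habs : ∀ k l, Summable fun n => ‖DnC A (n + 1) z k l‖) :
    AstarC A (-1) z + AstarC A 0 z * (∑' n, DnC A (n + 1) z)
      + AstarC A 1 z * (∑' n, DnC A (n + 1) z) ^ 2 = ∑' n, DnC A (n + 1) z :=
  stmt14_general A z habs
end

section
/- With G₁(z) = N₁(z) A_{*,−1}(z), R₁(z) = A_{*,1}(z) N₁(z), and H₁(z) = A_{*,0}(z) + A_{*,1}(z) N₁(z) A_{*,−1}(z), and assuming (I − H₁(z)) N₁(z) = I, the Wiener–Hopf-type factorization I − C(z,w) = (w^{−1} I − R₁(z)) (I − H₁(z)) (w I − G₁(z)) holds for every nonzero complex w, where C(z,w) = A_{*,−1}(z) w^{−1} + A_{*,0}(z) + A_{*,1}(z) w. -/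
open Matrix

/-- With `G₁ = N₁ A_{*,−1}`, `R₁ = A_{*,1} N₁`, `H₁ = A_{*,0} + A_{*,1} N₁ A_{*,−1}`, and
`(I − H₁) N₁ = I`, the Wiener–Hopf-type factorization
`I − C(z,w) = (w⁻¹ I − R₁)(I − H₁)(w I − G₁)` holds for every nonzero complex `w`, where
`C(z,w) = A_{*,−1} w⁻¹ + A_{*,0} + A_{*,1} w`. -/
theorem stmt15 {S : Type*} [Fintype S] [DecidableEq S]
    (Am A0 Ap N : Matrix S S ℂ)
    (hN : (1 - (A0 + Ap * N * Am)) * N = 1)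
    (w : ℂ) (hw : w ≠ 0) :
    1 - (w⁻¹ • Am + A0 + w • Ap) =
      (w⁻¹ • (1 : Matrix S S ℂ) - Ap * N) * (1 - (A0 + Ap * N * Am)) *
        (w • (1 : Matrix S S ℂ) - N * Am) := by
  set M : Matrix S S ℂ := 1 - (A0 + Ap * N * Am) with hM
  have hNM : N * M = 1 := mul_eq_one_comm.mp hN
  have h1 : (w⁻¹ • (1 : Matrix S S ℂ) - Ap * N) * M = w⁻¹ • M - Ap := by
    rw [Matrix.sub_mul, Matrix.smul_mul, Matrix.one_mul, Matrix.mul_assoc, hNM, Matrix.mul_one]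
  rw [h1, Matrix.sub_mul]
  have h2 : M * (w • 1 - N * Am) = w • M - Am := by
    rw [Matrix.mul_sub, mul_smul_comm, Matrix.mul_one, ← Matrix.mul_assoc, hN, Matrix.one_mul]
  rw [Matrix.smul_mul, h2, smul_sub, smul_smul, inv_mul_cancel₀ hw, one_smul, Matrix.mul_sub,
    mul_smul_comm, Matrix.mul_one, hM]
  rw [Matrix.mul_assoc Ap N Am]
  abel
end
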